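/- Let H = L²((-1,1), ℂ) with Lebesgue measure and let A ∈ B(H) be the multiplication operator (Af)(t) = t f(t). Then there exist orthogonal projections P, Q on H with P - Q = A; moreover ker A = {0} and ker(1 - A²) = {0}, so any such pair (P, Q) is in generic position. -/

import Mathlib

/-!
Let `R f (t) = f (-t)` and let `S` be multiplication by `√(1 - t²)`. Both are selfadjoint, and
`C = S R` is selfadjoint with `A C + C A = 0` (since `R A = -A R`) and
`A² + C² = t² + (1 - t²) = 1`. Hence `A + C` and `C - A` are selfadjoint involutions, and
`P = (1 + (A + C)) / 2`, `Q = (1 + (C - A)) / 2` are orthogonal projections with `P - Q = A`.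

`A` and `1 - A²` are multiplications by `t` and `1 - t²`, which vanish only on a null set of
`(-1, 1)`, so both are injective. For idempotents `P`, `Q` with `P - Q = A`, a vector in
`ran P ∩ ran Q` or `ker P ∩ ker Q` is killed by `A`, while one in `ran P ∩ ker Q` or
`ker P ∩ ran Q` satisfies `A x = ± x` and is killed by `1 - A²`.
-/

open MeasureTheory ContinuousLinearMap

/-- Lebesgue measure restricted to the interval `(-1, 1)`. -/
noncomputable def lebIoo : Measure ℝ := volume.restrict (Set.Ioo (-1 : ℝ) 1)

/-- The Hilbert space `L²((-1,1), ℂ)`. -/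
noncomputable abbrev L2I : Type := Lp ℂ 2 lebIoo

/-- An orthogonal projection: a selfadjoint idempotent bounded operator. -/
def IsOrthogonalProjection (P : L2I →L[ℂ] L2I) : Prop :=
  IsSelfAdjoint P ∧ P * P = P

/-- Two orthogonal projections are in generic position if the four canonical intersections
of their ranges and kernels are trivial. -/
def GenericPosition (P Q : L2I →L[ℂ] L2I) : Prop :=
  LinearMap.range (P : L2I →ₗ[ℂ] L2I) ⊓ LinearMap.range (Q : L2I →ₗ[ℂ] L2I) = ⊥ ∧
  LinearMap.range (P : L2I →ₗ[ℂ] L2I) ⊓ LinearMap.ker (Q : L2I →ₗ[ℂ] L2I) = ⊥ ∧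
  LinearMap.ker (P : L2I →ₗ[ℂ] L2I) ⊓ LinearMap.range (Q : L2I →ₗ[ℂ] L2I) = ⊥ ∧
  LinearMap.ker (P : L2I →ₗ[ℂ] L2I) ⊓ LinearMap.ker (Q : L2I →ₗ[ℂ] L2I) = ⊥

open scoped ENNReal InnerProductSpace

section MultiplicationOperator

variable {α 𝕜 : Type*} [MeasurableSpace α] {μ : Measure α} [RCLike 𝕜] {p : ℝ≥0∞} [Fact (1 ≤ p)]

def IsMultiplicationOperator (T : Lp 𝕜 p μ →L[𝕜] Lp 𝕜 p μ) (φ : α → 𝕜) : Prop :=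
  ∀ f : Lp 𝕜 p μ, (T f : α → 𝕜) =ᵐ[μ] fun t => φ t * f t

theorem exists_isMultiplicationOperator {φ : α → 𝕜} (hφ : MemLp φ ∞ μ) :
    ∃ T : Lp 𝕜 p μ →L[𝕜] Lp 𝕜 p μ, IsMultiplicationOperator T φ := by
  refine ⟨(ContinuousLinearMap.mul 𝕜 𝕜).holderL μ ∞ p p (hφ.toLp φ), fun f => ?_⟩
  filter_upwards [(ContinuousLinearMap.mul 𝕜 𝕜).coeFn_holder (r := p) (hφ.toLp φ) f,
    hφ.coeFn_toLp] with t h1 h2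
  simp only [holderL_apply_apply, h1, mul_apply', h2]

namespace IsMultiplicationOperator

variable {T S : Lp 𝕜 p μ →L[𝕜] Lp 𝕜 p μ} {φ ψ : α → 𝕜}

theorem eq_of_ae_eq (hT : IsMultiplicationOperator T φ) (hS : IsMultiplicationOperator S ψ)
    (h : φ =ᵐ[μ] ψ) : T = S := by
  ext f
  filter_upwards [hT f, hS f, h] with t hTt hSt ht
  rw [hTt, hSt, ht]

protected theorem one : IsMultiplicationOperator (1 : Lp 𝕜 p μ →L[𝕜] Lp 𝕜 p μ) 1 :=
  fun f => .of_forall fun t => by simp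

protected theorem mul (hT : IsMultiplicationOperator T φ) (hS : IsMultiplicationOperator S ψ) :
    IsMultiplicationOperator (T * S) (φ * ψ) := fun f => by
  filter_upwards [hT (S f), hS f] with t h1 h2
  rw [mul_apply_eq_comp, h1, h2, Pi.mul_apply, mul_assoc]

protected theorem add (hT : IsMultiplicationOperator T φ) (hS : IsMultiplicationOperator S ψ) :
    IsMultiplicationOperator (T + S) (φ + ψ) := fun f => by
  filter_upwards [Lp.coeFn_add (T f) (S f), hT f, hS f] with t h h1 h2
  simp only [add_apply, h, Pi.add_apply, h1, h2, add_mul]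

protected theorem neg (hT : IsMultiplicationOperator T φ) :
    IsMultiplicationOperator (-T) (-φ) := fun f => by
  filter_upwards [Lp.coeFn_neg (T f), hT f] with t h h1
  simp only [neg_apply, h, Pi.neg_apply, h1, neg_mul]

protected theorem sub (hT : IsMultiplicationOperator T φ) (hS : IsMultiplicationOperator S ψ) :
    IsMultiplicationOperator (T - S) (φ - ψ) := by
  simpa only [sub_eq_add_neg] using hT.add hS.neg

theorem commute (hT : IsMultiplicationOperator T φ) (hS : IsMultiplicationOperator S ψ) :
    Commute T S :=
  (hT.mul hS).eq_of_ae_eq (hS.mul hT) (.of_forall fun t => mul_comm (φ t) (ψ t))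

theorem ker_eq_bot (hT : IsMultiplicationOperator T φ) (hφ : ∀ᵐ t ∂μ, φ t ≠ 0) :
    LinearMap.ker (T : Lp 𝕜 p μ →ₗ[𝕜] Lp 𝕜 p μ) = ⊥ := by
  refine LinearMap.ker_eq_bot'.mpr fun f hf => Lp.ext ?_
  have hTf : (T f : α → 𝕜) =ᵐ[μ] 0 := by
    rw [show T f = 0 from hf]
    exact Lp.coeFn_zero _ _ _
  filter_upwards [hT f, hTf, hφ, Lp.coeFn_zero 𝕜 p μ] with t h1 h2 h3 h4
  rw [h4]
  exact (mul_eq_zero.mp (h1.symm.trans h2)).resolve_left h3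

theorem isSelfAdjoint {T : Lp 𝕜 2 μ →L[𝕜] Lp 𝕜 2 μ} (hT : IsMultiplicationOperator T φ)
    (hφ : ∀ t, star (φ t) = φ t) : IsSelfAdjoint T := by
  rw [isSelfAdjoint_iff_isSymmetric]
  intro f g
  rw [L2.inner_def, L2.inner_def]
  refine integral_congr_ae ?_
  filter_upwards [hT f, hT g] with t h1 h2
  rw [RCLike.inner_apply, RCLike.inner_apply, coe_coe, h1, h2, map_mul, starRingEnd_apply, hφ]
  ring

end IsMultiplicationOperator

variable {σ : α → α}

variable (𝕜) in
noncomputable def MeasureTheory.Lp.compMeasurePreservingL (σ : α → α)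
    (hσ : MeasurePreserving σ μ μ) : Lp 𝕜 p μ →L[𝕜] Lp 𝕜 p μ :=
  (Lp.compMeasurePreservingₗᵢ 𝕜 σ hσ).toContinuousLinearMap

namespace MeasureTheory.Lp

theorem coeFn_compMeasurePreservingL (hσ : MeasurePreserving σ μ μ) (f : Lp 𝕜 p μ) :
    compMeasurePreservingL 𝕜 σ hσ f =ᵐ[μ] f ∘ σ :=
  coeFn_compMeasurePreserving f hσ

theorem compMeasurePreservingL_mul_self (hσ : MeasurePreserving σ μ μ)
    (hinv : Function.Involutive σ) :
    (compMeasurePreservingL 𝕜 σ hσ : Lp 𝕜 p μ →L[𝕜] Lp 𝕜 p μ) * compMeasurePreservingL 𝕜 σ hσ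
      = 1 := by
  ext f
  filter_upwards [coeFn_compMeasurePreservingL hσ (compMeasurePreservingL 𝕜 σ hσ f),
    hσ.quasiMeasurePreserving.ae_eq_comp (coeFn_compMeasurePreservingL hσ f)] with t h1 h2
  rw [mul_apply_eq_comp, one_apply_eq_self, h1, h2, Function.comp_apply, Function.comp_apply,
    hinv t]

theorem isSelfAdjoint_compMeasurePreservingL (hσ : MeasurePreserving σ μ μ)
    (hinv : Function.Involutive σ) :
    IsSelfAdjoint (compMeasurePreservingL 𝕜 σ hσ : Lp 𝕜 2 μ →L[𝕜] Lp 𝕜 2 μ) := by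
  rw [isSelfAdjoint_iff_isSymmetric]
  intro f g
  set R : Lp 𝕜 2 μ →L[𝕜] Lp 𝕜 2 μ := compMeasurePreservingL 𝕜 σ hσ
  calc ⟪R f, g⟫_𝕜 = ⟪R f, R (R g)⟫_𝕜 := by
        rw [← mul_apply_eq_comp, compMeasurePreservingL_mul_self hσ hinv, one_apply_eq_self]
    _ = ⟪f, R g⟫_𝕜 := (compMeasurePreservingₗᵢ 𝕜 σ hσ).inner_map_map f (R g)

end MeasureTheory.Lp

theorem IsMultiplicationOperator.compMeasurePreservingL_mul_eq (hσ : MeasurePreserving σ μ μ)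
    {T T' : Lp 𝕜 p μ →L[𝕜] Lp 𝕜 p μ} {φ : α → 𝕜} (hT : IsMultiplicationOperator T φ)
    (hT' : IsMultiplicationOperator T' (φ ∘ σ)) :
    Lp.compMeasurePreservingL 𝕜 σ hσ * T = T' * Lp.compMeasurePreservingL 𝕜 σ hσ := by
  ext f
  filter_upwards [Lp.coeFn_compMeasurePreservingL hσ (T f),
    hσ.quasiMeasurePreserving.ae_eq_comp (hT f), hT' (Lp.compMeasurePreservingL 𝕜 σ hσ f),
    Lp.coeFn_compMeasurePreservingL hσ f] with t h1 h2 h3 h4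
  rw [mul_apply_eq_comp, mul_apply_eq_comp, h1, h3, h4]
  exact h2

end MultiplicationOperator

section StarProjection

variable {R : Type*} [Ring R] [StarRing R]

theorem isStarProjection_smul_one_add_of_mul_self_eq_one (𝕜 : Type*) [Field 𝕜] [CharZero 𝕜]
    [StarRing 𝕜] [Algebra 𝕜 R] [StarModule 𝕜 R] {b : R} (hb : IsSelfAdjoint b)
    (hbb : b * b = 1) : IsStarProjection ((2⁻¹ : 𝕜) • (1 + b)) where
  isIdempotentElem := by
    have h : (1 + b) * (1 + b) = (2 : 𝕜) • (1 + b) := by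
      calc (1 + b) * (1 + b) = 1 + b + b + b * b := by noncomm_ring
        _ = (2 : 𝕜) • (1 + b) := by rw [hbb]; module
    rw [IsIdempotentElem, smul_mul_smul_comm, h, smul_smul]
    norm_num
  isSelfAdjoint := IsSelfAdjoint.smul (by simp [IsSelfAdjoint]) ((IsSelfAdjoint.one R).add hb)

theorem exists_isStarProjection_sub_eq [Algebra ℂ R] [StarModule ℂ R] {a c : R}
    (ha : IsSelfAdjoint a) (hc : IsSelfAdjoint c) (hanti : a * c + c * a = 0)
    (hsq : a * a + c * c = 1) :
    ∃ p q : R, IsStarProjection p ∧ IsStarProjection q ∧ p - q = a := by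
  have hp : (a + c) * (a + c) = 1 := by
    rw [← hsq, ← add_zero (a * a + c * c), ← hanti]; noncomm_ring
  have hq : (c - a) * (c - a) = 1 := by
    rw [← hsq, ← sub_zero (a * a + c * c), ← hanti]; noncomm_ring
  refine ⟨_, _, isStarProjection_smul_one_add_of_mul_self_eq_one ℂ (ha.add hc) hp,
    isStarProjection_smul_one_add_of_mul_self_eq_one ℂ (hc.sub ha) hq, ?_⟩
  module

end StarProjection

section GenericPosition

open LinearMap

variable {R M : Type*} [Ring R] [AddCommGroup M] [Module R M] {p q : Module.End R M}

theorem range_inf_range_le_ker_sub (hp : IsIdempotentElem p) (hq : IsIdempotentElem q) :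
    range p ⊓ range q ≤ ker (p - q) := by
  rintro x ⟨hxp, hxq⟩
  rw [mem_ker, LinearMap.sub_apply, hp.mem_range_iff.mp hxp, hq.mem_range_iff.mp hxq, sub_self]

theorem ker_inf_ker_le_ker_sub : ker p ⊓ ker q ≤ ker (p - q) := by
  rintro x ⟨hxp, hxq⟩
  rw [mem_ker, LinearMap.sub_apply, mem_ker.mp hxp, mem_ker.mp hxq, sub_self]

theorem range_inf_ker_le_ker_one_sub_mul_self (hp : IsIdempotentElem p) :
    range p ⊓ ker q ≤ ker (1 - (p - q) * (p - q)) := by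
  rintro x ⟨hxp, hxq⟩
  have hx : (p - q) x = x := by
    rw [LinearMap.sub_apply, hp.mem_range_iff.mp hxp, mem_ker.mp hxq, sub_zero]
  rw [mem_ker, LinearMap.sub_apply, Module.End.mul_apply, hx, hx, Module.End.one_apply, sub_self]

theorem ker_inf_range_le_ker_one_sub_mul_self (hq : IsIdempotentElem q) :
    ker p ⊓ range q ≤ ker (1 - (p - q) * (p - q)) := by
  rintro x ⟨hxp, hxq⟩
  have hx : (p - q) x = -x := by
    rw [LinearMap.sub_apply, mem_ker.mp hxp, hq.mem_range_iff.mp hxq, zero_sub]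
  rw [mem_ker, LinearMap.sub_apply, Module.End.mul_apply, hx, map_neg, hx, neg_neg,
    Module.End.one_apply, sub_self]

end GenericPosition

theorem genericPosition_of_ker_eq_bot {P Q : L2I →L[ℂ] L2I} (hP : IsIdempotentElem P)
    (hQ : IsIdempotentElem Q) (h0 : LinearMap.ker ((P - Q : L2I →L[ℂ] L2I) : L2I →ₗ[ℂ] L2I) = ⊥)
    (h1 : LinearMap.ker ((1 - (P - Q) * (P - Q) : L2I →L[ℂ] L2I) : L2I →ₗ[ℂ] L2I) = ⊥) :
    GenericPosition P Q := by
  rw [toLinearMap_sub] at h0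
  rw [toLinearMap_sub, toLinearMap_one, toLinearMap_mul, toLinearMap_sub] at h1
  have hP' := isIdempotentElem_toLinearMap_iff.mpr hP
  have hQ' := isIdempotentElem_toLinearMap_iff.mpr hQ
  exact ⟨eq_bot_iff.mpr (h0 ▸ range_inf_range_le_ker_sub hP' hQ'),
    eq_bot_iff.mpr (h1 ▸ range_inf_ker_le_ker_one_sub_mul_self hP'),
    eq_bot_iff.mpr (h1 ▸ ker_inf_range_le_ker_one_sub_mul_self hQ'),
    eq_bot_iff.mpr (h0 ▸ ker_inf_ker_le_ker_sub)⟩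

theorem measurePreserving_neg_lebIoo : MeasurePreserving (fun t : ℝ => -t) lebIoo lebIoo := by
  have h := (Measure.measurePreserving_neg (volume : Measure ℝ)).restrict_preimage
    (s := Set.Ioo (-1 : ℝ) 1) measurableSet_Ioo
  have hpre : (Neg.neg : ℝ → ℝ) ⁻¹' Set.Ioo (-1 : ℝ) 1 = Set.Ioo (-1 : ℝ) 1 := by
    ext x
    simp [Set.mem_Ioo, and_comm, neg_lt]
  simpa [lebIoo, hpre] using h

theorem memLp_top_sqrt_one_sub_sq :
    MemLp (fun t : ℝ => ((√(1 - t ^ 2) : ℝ) : ℂ)) ∞ lebIoo := by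
  refine memLp_top_of_bound (by fun_prop) 1 (.of_forall fun t => ?_)
  rw [Complex.norm_real, Real.norm_of_nonneg (Real.sqrt_nonneg _), Real.sqrt_le_one]
  nlinarith [sq_nonneg t]

theorem exists_isSelfAdjoint_anticomm_add_mul_self_eq_one {A : L2I →L[ℂ] L2I}
    (hA : IsMultiplicationOperator A (fun t : ℝ => (t : ℂ))) :
    ∃ C : L2I →L[ℂ] L2I, IsSelfAdjoint C ∧ A * C + C * A = 0 ∧ A * A + C * C = 1 := by
  set s : ℝ → ℂ := fun t => ((√(1 - t ^ 2) : ℝ) : ℂ)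
  obtain ⟨S, hS⟩ : ∃ S : L2I →L[ℂ] L2I, IsMultiplicationOperator S s :=
    exists_isMultiplicationOperator memLp_top_sqrt_one_sub_sq
  have hs_even : s ∘ (fun t => -t) = s := funext fun t => by simp [s]
  set R : L2I →L[ℂ] L2I := Lp.compMeasurePreservingL ℂ _ measurePreserving_neg_lebIoo
  have hRR : R * R = 1 := Lp.compMeasurePreservingL_mul_self _ neg_involutive
  have hRS : R * S = S * R := hS.compMeasurePreservingL_mul_eq _ (by rwa [hs_even])
  have hRA : R * A = -A * R := hA.compMeasurePreservingL_mul_eq _ <| by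
    convert hA.neg using 1
    ext t
    simp
  refine ⟨S * R, ?_, ?_, ?_⟩
  · exact (IsSelfAdjoint.commute_iff (hS.isSelfAdjoint fun t => Complex.conj_ofReal _)
      (Lp.isSelfAdjoint_compMeasurePreservingL _ neg_involutive)).mp hRS.symm
  · calc A * (S * R) + S * R * A = (A * S - S * A) * R := by
          rw [mul_assoc S R A, hRA]; noncomm_ring
      _ = 0 := by rw [(hA.commute hS).eq, sub_self, zero_mul]
  · calc A * A + S * R * (S * R) = A * A + S * S * (R * R) := by
          rw [show S * R * (S * R) = S * (R * S) * R by noncomm_ring, hRS]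
          noncomm_ring
      _ = A * A + S * S := by rw [hRR, mul_one]
      _ = 1 := by
        refine ((hA.mul hA).add (hS.mul hS)).eq_of_ae_eq IsMultiplicationOperator.one ?_
        filter_upwards [ae_restrict_mem measurableSet_Ioo] with t ⟨ht₁, ht₂⟩
        have h : √(1 - t ^ 2) * √(1 - t ^ 2) = 1 - t ^ 2 := Real.mul_self_sqrt (by nlinarith)
        show (t : ℂ) * t + ((√(1 - t ^ 2) : ℝ) : ℂ) * ((√(1 - t ^ 2) : ℝ) : ℂ) = 1
        rw [← Complex.ofReal_mul (√_), h]
        push_cast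
        ring

/-- Let `A` be the multiplication operator `(Af)(t) = t f(t)` on
`L²((-1,1), ℂ)`. Then `A` is a difference of orthogonal projections, `ker A = 0`,
`ker (1 - A²) = 0`, and every pair of orthogonal projections with difference `A` is in
generic position. -/
theorem multiplication_operator_generic (A : L2I →L[ℂ] L2I)
    (hA : ∀ f : L2I, (A f : ℝ → ℂ) =ᵐ[lebIoo] fun t => (t : ℂ) * f t) :
    (∃ P Q : L2I →L[ℂ] L2I,
      IsOrthogonalProjection P ∧ IsOrthogonalProjection Q ∧ P - Q = A) ∧
    LinearMap.ker (A : L2I →ₗ[ℂ] L2I) = ⊥ ∧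
    LinearMap.ker ((1 - A * A : L2I →L[ℂ] L2I) : L2I →ₗ[ℂ] L2I) = ⊥ ∧
    ∀ P Q : L2I →L[ℂ] L2I, IsOrthogonalProjection P → IsOrthogonalProjection Q →
      P - Q = A → GenericPosition P Q := by
  have hA' : IsMultiplicationOperator A (fun t : ℝ => (t : ℂ)) := hA
  have hkerA := hA'.ker_eq_bot <| by
    filter_upwards [ae_restrict_of_ae (Measure.ae_ne volume 0)] with t ht
    exact Complex.ofReal_ne_zero.mpr ht
  have hker1 := (IsMultiplicationOperator.one.sub (hA'.mul hA')).ker_eq_bot <| by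
    filter_upwards [ae_restrict_mem measurableSet_Ioo] with t ⟨ht₁, ht₂⟩
    have h : (1 - t * t : ℝ) ≠ 0 := by nlinarith
    simp only [Pi.sub_apply, Pi.mul_apply, Pi.one_apply]
    exact_mod_cast h
  obtain ⟨C, hC, hanti, hsq⟩ := exists_isSelfAdjoint_anticomm_add_mul_self_eq_one hA'
  obtain ⟨P, Q, hP, hQ, hPQ⟩ :=
    exists_isStarProjection_sub_eq (hA'.isSelfAdjoint fun t => Complex.conj_ofReal t) hC hanti hsq
  refine ⟨⟨P, Q, ⟨hP.isSelfAdjoint, hP.isIdempotentElem⟩, ⟨hQ.isSelfAdjoint, hQ.isIdempotentElem⟩,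
    hPQ⟩, hkerA, hker1, ?_⟩
  rintro P Q hP hQ rfl
  exact genericPosition_of_ker_eq_bot hP.2 hQ.2 hkerA hker1
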